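/- Chen's identity: for a continuously differentiable path X : [0,T] → ℝ^d, any 0 ≤ s ≤ u ≤ t ≤ T, and any multi-index K = (k_1,…,k_n), the signature satisfies 𝕏_{s,t}^{(K)} = Σ_{I⊗J = K} 𝕏_{s,u}^{(I)} · 𝕏_{u,t}^{(J)}, where the sum runs over all (possibly empty) prefix–suffix decompositions of K. -/

import Mathlib

open intervalIntegral

/-- Auxiliary signature: recursion on the *reversed* multi-index. -/
noncomputable def sigAux {d : ℕ} (X : ℝ → Fin d → ℝ) (s : ℝ) : List (Fin d) → ℝ → ℝ
  | [] => fun _ => (1 : ℝ)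
  | a :: K => fun t => ∫ u in s..t, sigAux X s K u * deriv (fun v => X v a) u

/-- Signature term `𝕏_{s,t}^{(K)}` of a C¹ path: `𝕏^{(∅)} = 1` and
`𝕏_{s,t}^{(K̂ ⊗ a)} = ∫_s^t 𝕏_{s,u}^{(K̂)} (X^{(a)})'(u) du`. -/
noncomputable def sig {d : ℕ} (X : ℝ → Fin d → ℝ) (s t : ℝ) (K : List (Fin d)) : ℝ :=
  sigAux X s K.reverse t

/-! Chen's identity is proved by induction on `K = K̂ ⊗ a`. Splitting `∫_s^t` at `u`, the piece
over `[s, u]` is `𝕏_{s,u}^{(K)}`, the decomposition with empty suffix. In the piece over `[u, t]`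
the integrand `𝕏_{s,v}^{(K̂)}` is expanded by the induction hypothesis at the split point `u`;
integrating each term `𝕏_{s,u}^{(I)} 𝕏_{u,v}^{(J)}` against `(X^{(a)})'` gives
`𝕏_{s,u}^{(I)} 𝕏_{u,t}^{(J ⊗ a)}`, which are the remaining decompositions of `K`. -/

lemma List.sum_range_take_drop_append_singleton {α M : Type*} [AddCommMonoid M]
    (f : List α → List α → M) (K : List α) (a : α) :
    ∑ i ∈ Finset.range ((K ++ [a]).length + 1), f ((K ++ [a]).take i) ((K ++ [a]).drop i) =
      ∑ i ∈ Finset.range (K.length + 1), f (K.take i) (K.drop i ++ [a]) + f (K ++ [a]) [] := by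
  rw [List.length_append, List.length_singleton, Finset.sum_range_succ,
    List.take_of_length_le (by simp), List.drop_of_length_le (by simp)]
  congr 1
  refine Finset.sum_congr rfl fun i hi => ?_
  have hi : i ≤ K.length := Nat.lt_succ_iff.mp (Finset.mem_range.mp hi)
  rw [List.take_append_of_le_length hi, List.drop_append_of_le_length hi]

section Signature

variable {d : ℕ} (X : ℝ → Fin d → ℝ)

@[simp]
lemma sig_nil (s t : ℝ) : sig X s t [] = 1 := rfl

lemma sig_append_singleton (s t : ℝ) (K : List (Fin d)) (a : Fin d) :
    sig X s t (K ++ [a]) = ∫ v in s..t, sig X s v K * deriv (fun w => X w a) v := by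
  simp [sig, sigAux, List.reverse_append]

variable {X}

lemma continuous_sigAux (hX : ∀ a, ContDiff ℝ 1 fun v => X v a) (s : ℝ) :
    ∀ K : List (Fin d), Continuous (sigAux X s K)
  | [] => continuous_const
  | a :: K => by
      have h := (continuous_sigAux hX s K).mul ((hX a).continuous_deriv le_rfl)
      exact continuous_primitive (fun a b => h.intervalIntegrable a b) s

lemma continuous_sig_mul_deriv (hX : ∀ a, ContDiff ℝ 1 fun v => X v a) (s : ℝ)
    (K : List (Fin d)) (a : Fin d) :
    Continuous fun v => sig X s v K * deriv (fun w => X w a) v :=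
  (continuous_sigAux hX s K.reverse).mul ((hX a).continuous_deriv le_rfl)

lemma sig_eq_sum_take_drop (hX : ∀ a, ContDiff ℝ 1 fun v => X v a) (K : List (Fin d))
    (s u t : ℝ) :
    sig X s t K =
      ∑ i ∈ Finset.range (K.length + 1), sig X s u (K.take i) * sig X u t (K.drop i) := by
  induction K using List.reverseRecOn generalizing t with
  | nil => simp
  | append_singleton K a ih =>
    set f := fun v => deriv (fun w => X w a) v
    have hsplit : sig X s t (K ++ [a]) =
        sig X s u (K ++ [a]) + ∫ v in u..t, sig X s v K * f v := by
      rw [sig_append_singleton, sig_append_singleton]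
      exact (integral_add_adjacent_intervals
        ((continuous_sig_mul_deriv hX s K a).intervalIntegrable s u)
        ((continuous_sig_mul_deriv hX s K a).intervalIntegrable u t)).symm
    have hexpand : (∫ v in u..t, sig X s v K * f v) =
        ∑ i ∈ Finset.range (K.length + 1),
          sig X s u (K.take i) * sig X u t (K.drop i ++ [a]) := by
      simp_rw [ih, Finset.sum_mul, mul_assoc]
      rw [integral_finsetSum fun i _ =>
        ((continuous_sig_mul_deriv hX u (K.drop i) a).const_mul _).intervalIntegrable u t]
      simp_rw [integral_const_mul, sig_append_singleton]
    rw [hsplit, hexpand,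
      List.sum_range_take_drop_append_singleton (fun I J => sig X s u I * sig X u t J),
      sig_nil, mul_one, add_comm]

end Signature

theorem chen_identity_general {d : ℕ} (X : ℝ → Fin d → ℝ)
    (hX : ∀ a, ContDiff ℝ 1 fun v => X v a)
    (s u t : ℝ)
    (K : List (Fin d)) :
    sig X s t K =
      ∑ i ∈ Finset.range (K.length + 1), sig X s u (K.take i) * sig X u t (K.drop i) :=
  sig_eq_sum_take_drop hX K s u t

/-- Chen's identity.  For any `s ≤ u ≤ t` and any multi-index `K`,
`𝕏_{s,t}^{(K)} = Σ_{I ⊗ J = K} 𝕏_{s,u}^{(I)} · 𝕏_{u,t}^{(J)}`, the sum running over all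
prefix–suffix decompositions of `K`. -/
theorem chen_identity {d : ℕ} (T : ℝ) (X : ℝ → Fin d → ℝ)
    (hX : ∀ a, ContDiff ℝ 1 fun v => X v a)
    (s u t : ℝ) (hs : 0 ≤ s) (hsu : s ≤ u) (hut : u ≤ t) (ht : t ≤ T)
    (K : List (Fin d)) :
    sig X s t K =
      ∑ i ∈ Finset.range (K.length + 1), sig X s u (K.take i) * sig X u t (K.drop i) :=
  chen_identity_general X hX s u t K
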